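/- Let u : ℂ → ℝ be a C² function and let c > 0. Then it is impossible that Δu(z) ≥ c·e^{u(z)} for all z ∈ ℂ, where Δ is the Laplacian on ℝ² ≅ ℂ. -/

import Mathlib

open Filter Set

/-- The Laplacian of a function `u : ℂ → ℝ`, viewing `ℂ ≅ ℝ²`: the sum of the
second derivatives in the directions `1` and `I`. -/
noncomputable def laplacianC (u : ℂ → ℝ) (z : ℂ) : ℝ :=
  (fderiv ℝ (fun w => (fderiv ℝ u w) 1) z) 1 +
  (fderiv ℝ (fun w => (fderiv ℝ u w) Complex.I) z) Complex.I


lemma sdt_aux {g g' : ℝ → ℝ} {a : ℝ} (hmax : IsLocalMax g 0)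
    (hg : ∀ᶠ t in nhds (0:ℝ), HasDerivAt g (g' t) t)
    (hg' : HasDerivAt g' a 0) : a ≤ 0 := by
  by_contra hca
  push_neg at hca
  have h0 : g' 0 = 0 := by
    have h1 : deriv g 0 = 0 := hmax.deriv_eq_zero
    have h2 := (hg.self_of_nhds).deriv
    rw [h1] at h2; exact h2.symm
  -- eventually on the right, g' t > 0
  have hslope := hasDerivAt_iff_tendsto_slope.1 hg'
  have hpos : ∀ᶠ t in nhdsWithin (0:ℝ) (Set.Ioi 0), 0 < g' t := by
    have h3 : ∀ᶠ t in nhdsWithin (0:ℝ) (Set.Ioi 0), 0 < slope g' 0 t := by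
      have := hslope.mono_left (nhdsWithin_mono _ (fun x (hx : (0:ℝ) < x) =>
        (Set.mem_compl_singleton_iff).2 (ne_of_gt hx)))
      exact this.eventually (eventually_gt_nhds hca)
    filter_upwards [h3, self_mem_nhdsWithin] with t ht (ht0 : (0:ℝ) < t)
    have : slope g' 0 t = g' t / t := by
      simp [slope, h0, div_eq_inv_mul]
    rw [this] at ht
    have := mul_pos ht ht0
    rwa [div_mul_cancel₀] at this
    exact ne_of_gt ht0
  rw [eventually_nhdsWithin_iff] at hpos
  obtain ⟨δ1, hδ1, H1⟩ := Metric.eventually_nhds_iff.1 (hpos.and (hg.and hmax))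
  set t1 := δ1/2 with ht1def
  have ht1 : 0 < t1 := by positivity
  have hmono : StrictMonoOn g (Icc 0 t1) := by
    apply strictMonoOn_of_deriv_pos (convex_Icc 0 t1)
    · intro x hx
      have : dist x (0:ℝ) < δ1 := by
        rw [Real.dist_eq, sub_zero, abs_of_nonneg hx.1]
        calc x ≤ t1 := hx.2
        _ < δ1 := by linarith
      exact ((H1 this).2.1).continuousAt.continuousWithinAt
    · intro x hx
      rw [interior_Icc] at hx
      have hd : dist x (0:ℝ) < δ1 := by
        rw [Real.dist_eq, sub_zero, abs_of_nonneg hx.1.le]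
        calc x ≤ t1 := hx.2.le
        _ < δ1 := by linarith
      rw [(H1 hd).2.1.deriv]
      exact (H1 hd).1 hx.1
  have hlt : g 0 < g t1 := hmono (by constructor <;> [rfl; exact ht1.le]) (by
      constructor <;> [exact ht1.le; rfl]) ht1
  have : dist t1 (0:ℝ) < δ1 := by
    rw [Real.dist_eq, sub_zero, abs_of_nonneg ht1.le]; linarith
  have := (H1 this).2.2
  exact absurd this (not_le.2 hlt)

lemma dir_nonpos {f : ℂ → ℝ} {z0 : ℂ} (hf : ∀ᶠ z in nhds z0, ContDiffAt ℝ 2 f z)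
    (hmax : IsLocalMax f z0) (e : ℂ) :
    (fderiv ℝ (fun w => (fderiv ℝ f w) e) z0) e ≤ 0 := by
  set φ : ℝ → ℂ := fun t => z0 + t • e with hφ
  have hφ0 : φ 0 = z0 := by simp [hφ]
  have hφd : ∀ t : ℝ, HasDerivAt φ e t := by
    intro t
    have h1 : HasDerivAt (fun t : ℝ => t • e) ((1:ℝ) • e) t :=
      (hasDerivAt_id t).smul_const e
    rw [one_smul] at h1; exact h1.const_add z0
  have hφc : Continuous φ := by
    exact continuous_const.add (continuous_id.smul continuous_const)
  have htend : Tendsto φ (nhds 0) (nhds z0) := by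
    rw [← hφ0]; exact hφc.continuousAt.tendsto
  set g : ℝ → ℝ := fun t => f (φ t) with hgdef
  set g' : ℝ → ℝ := fun t => (fderiv ℝ f (φ t)) e with hg'def
  have hmaxg : IsLocalMax g 0 := by
    have h := htend.eventually hmax
    unfold IsLocalMax IsMaxFilter
    filter_upwards [h] with t ht
    simpa [hgdef, hφ0] using ht
  have hev : ∀ᶠ t in nhds (0:ℝ), ContDiffAt ℝ 2 f (φ t) := htend.eventually hf
  have hg : ∀ᶠ t in nhds (0:ℝ), HasDerivAt g (g' t) t := by
    filter_upwards [hev] with t ht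
    exact ((ht.differentiableAt (by norm_num)).hasFDerivAt).comp_hasDerivAt t (hφd t)
  have hG : DifferentiableAt ℝ (fun w => (fderiv ℝ f w) e) z0 := by
    have hd : DifferentiableAt ℝ (fderiv ℝ f) z0 :=
      ((hf.self_of_nhds).fderiv_right (m := 1) (by norm_num)).differentiableAt (by norm_num)
    exact hd.clm_apply (differentiableAt_const e)
  have hg' : HasDerivAt g' ((fderiv ℝ (fun w => (fderiv ℝ f w) e) z0) e) 0 := by
    have h0 : HasFDerivAt (fun w => (fderiv ℝ f w) e)
        (fderiv ℝ (fun w => (fderiv ℝ f w) e) z0) (φ 0) := by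
      rw [hφ0]; exact hG.hasFDerivAt
    exact h0.comp_hasDerivAt 0 (hφd 0)
  exact sdt_aux hmaxg hg hg'

lemma laplacian_nonpos {f : ℂ → ℝ} {z0 : ℂ} (hf : ∀ᶠ z in nhds z0, ContDiffAt ℝ 2 f z)
    (hmax : IsLocalMax f z0) : laplacianC f z0 ≤ 0 := by
  have h1 := dir_nonpos hf hmax 1
  have h2 := dir_nonpos hf hmax Complex.I
  unfold laplacianC
  linarith

noncomputable def wf (R : ℝ) (z : ℂ) : ℝ := R^2 - z.re^2 - z.im^2
noncomputable def vf (R c : ℝ) (z : ℂ) : ℝ :=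
  Real.log (8*R^2/c) - 2 * Real.log (wf R z)

lemma wf_cont (R : ℝ) : Continuous (wf R) :=
  (continuous_const.sub (Complex.continuous_re.pow 2)).sub (Complex.continuous_im.pow 2)

lemma wf_contDiff (R : ℝ) : ContDiff ℝ ⊤ (wf R) := by
  have h1 : ContDiff ℝ ⊤ (fun z : ℂ => z.re) := Complex.reCLM.contDiff
  have h2 : ContDiff ℝ ⊤ (fun z : ℂ => z.im) := Complex.imCLM.contDiff
  exact (contDiff_const.sub (h1.pow 2)).sub (h2.pow 2)

lemma wf_pos {R : ℝ} {z : ℂ} (hz : ‖z‖ < R) : 0 < wf R z := by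
  have h1 : ‖z‖ ^ 2 = z.re^2 + z.im^2 := by
    rw [Complex.sq_norm, Complex.normSq_apply]; ring
  have h0 : 0 ≤ ‖z‖ := norm_nonneg z
  unfold wf; nlinarith

lemma vf_contDiffAt {R c : ℝ} {z : ℂ} (hz : 0 < wf R z) :
    ContDiffAt ℝ 2 (vf R c) z := by
  unfold vf
  apply ContDiffAt.sub contDiffAt_const
  exact contDiffAt_const.mul
    ((Real.contDiffAt_log.2 (ne_of_gt hz)).comp z ((wf_contDiff R).contDiffAt.of_le le_top))

noncomputable def Lw (z : ℂ) : ℂ →L[ℝ] ℝ :=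
  -((2*z.re) • Complex.reCLM + (2*z.im) • Complex.imCLM)

lemma wf_hasFDerivAt (R : ℝ) (z : ℂ) : HasFDerivAt (wf R) (Lw z) z := by
  have h1 : HasFDerivAt (fun z : ℂ => z.re^2)
      (z.re • Complex.reCLM + z.re • Complex.reCLM) z := by
    have := (Complex.reCLM.hasFDerivAt (x := z)).mul (Complex.reCLM.hasFDerivAt (x := z))
    simp only [sq]; exact this
  have h2 : HasFDerivAt (fun z : ℂ => z.im^2)
      (z.im • Complex.imCLM + z.im • Complex.imCLM) z := by
    have := (Complex.imCLM.hasFDerivAt (x := z)).mul (Complex.imCLM.hasFDerivAt (x := z))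
    simp only [sq]; exact this
  have h := ((hasFDerivAt_const (R^2) z).sub h1).sub h2
  refine h.congr_fderiv ?_
  unfold Lw
  ext w
  simp
  ring

lemma vf_hasFDerivAt {R c : ℝ} {z : ℂ} (hz : 0 < wf R z) :
    HasFDerivAt (vf R c) ((-2 * (wf R z)⁻¹) • Lw z) z := by
  have h := ((wf_hasFDerivAt R z).log (ne_of_gt hz)).const_mul 2
  have h2 := h.const_sub (Real.log (8*R^2/c))
  refine h2.congr_fderiv ?_
  ext w
  simp
  ring

lemma Lw_apply_one (z : ℂ) : Lw z 1 = -(2*z.re) := by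
  simp [Lw]

lemma Lw_apply_I (z : ℂ) : Lw z Complex.I = -(2*z.im) := by
  simp [Lw]

-- the first partials of vf on the region wf > 0
lemma vf_fderiv_one {R c : ℝ} {z : ℂ} (hz : 0 < wf R z) :
    (fderiv ℝ (vf R c) z) 1 = 4 * z.re * (wf R z)⁻¹ := by
  rw [(vf_hasFDerivAt (c := c) hz).fderiv]
  simp [Lw_apply_one]
  ring

lemma vf_fderiv_I {R c : ℝ} {z : ℂ} (hz : 0 < wf R z) :
    (fderiv ℝ (vf R c) z) Complex.I = 4 * z.im * (wf R z)⁻¹ := by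
  rw [(vf_hasFDerivAt (c := c) hz).fderiv]
  simp [Lw_apply_I]
  ring

lemma vf_laplacian {R c : ℝ} {z : ℂ} (hz : 0 < wf R z) :
    laplacianC (vf R c) z = 8 * R^2 / (wf R z)^2 := by
  have hopen : IsOpen {w : ℂ | 0 < wf R w} := isOpen_lt continuous_const (wf_cont R)
  have hmem : {w : ℂ | 0 < wf R w} ∈ nhds z := hopen.mem_nhds hz
  -- second derivative in direction 1
  have e1 : (fun w => (fderiv ℝ (vf R c) w) 1) =ᶠ[nhds z]
      (fun w => 4 * w.re * (wf R w)⁻¹) := by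
    filter_upwards [hmem] with w hw
    exact vf_fderiv_one hw
  have e2 : (fun w => (fderiv ℝ (vf R c) w) Complex.I) =ᶠ[nhds z]
      (fun w => 4 * w.im * (wf R w)⁻¹) := by
    filter_upwards [hmem] with w hw
    exact vf_fderiv_I hw
  have hre : HasFDerivAt (fun w : ℂ => 4 * w.re) ((4:ℝ) • Complex.reCLM) z := by
    simpa using (Complex.reCLM.hasFDerivAt (x := z)).const_mul (4:ℝ)
  have him : HasFDerivAt (fun w : ℂ => 4 * w.im) ((4:ℝ) • Complex.imCLM) z := by
    simpa using (Complex.imCLM.hasFDerivAt (x := z)).const_mul (4:ℝ)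
  have hinv : HasFDerivAt (fun w : ℂ => (wf R w)⁻¹) ((-((wf R z)^2)⁻¹) • Lw z) z := by
    have := (hasDerivAt_inv (ne_of_gt hz)).comp_hasFDerivAt z (wf_hasFDerivAt R z)
    exact this
  have d1 : HasFDerivAt (fun w : ℂ => 4 * w.re * (wf R w)⁻¹)
      ((4 * z.re) • ((-((wf R z)^2)⁻¹) • Lw z) + (wf R z)⁻¹ • ((4:ℝ) • Complex.reCLM)) z :=
    hre.mul hinv
  have d2 : HasFDerivAt (fun w : ℂ => 4 * w.im * (wf R w)⁻¹)
      ((4 * z.im) • ((-((wf R z)^2)⁻¹) • Lw z) + (wf R z)⁻¹ • ((4:ℝ) • Complex.imCLM)) z :=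
    him.mul hinv
  unfold laplacianC
  rw [e1.fderiv_eq, e2.fderiv_eq, d1.fderiv, d2.fderiv]
  have hwz : wf R z = R^2 - z.re^2 - z.im^2 := rfl
  simp [Lw_apply_one, Lw_apply_I]
  field_simp
  rw [hwz]
  ring

lemma vf_exp {R c : ℝ} {z : ℂ} (hR : 0 < R) (hc : 0 < c) (hz : 0 < wf R z) :
    c * Real.exp (vf R c z) = 8 * R^2 / (wf R z)^2 := by
  unfold vf
  rw [Real.exp_sub, Real.exp_log (by positivity), two_mul, Real.exp_add,
    Real.exp_log hz]
  field_simp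

lemma lap_sub {f g : ℂ → ℝ} {z : ℂ} (hf : ∀ᶠ w in nhds z, ContDiffAt ℝ 2 f w)
    (hg : ∀ᶠ w in nhds z, ContDiffAt ℝ 2 g w) :
    laplacianC (fun w => f w - g w) z = laplacianC f z - laplacianC g z := by
  have key : ∀ e : ℂ, (fderiv ℝ (fun w => (fderiv ℝ (fun w => f w - g w) w) e) z) e
      = (fderiv ℝ (fun w => (fderiv ℝ f w) e) z) e
        - (fderiv ℝ (fun w => (fderiv ℝ g w) e) z) e := by
    intro e
    have hev : (fun w => (fderiv ℝ (fun w => f w - g w) w) e) =ᶠ[nhds z]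
        (fun w => (fderiv ℝ f w) e - (fderiv ℝ g w) e) := by
      filter_upwards [hf, hg] with w hfw hgw
      rw [fderiv_fun_sub (hfw.differentiableAt (by norm_num))
        (hgw.differentiableAt (by norm_num))]
      simp
    have hdf : DifferentiableAt ℝ (fun w => (fderiv ℝ f w) e) z :=
      (((hf.self_of_nhds).fderiv_right (m := 1) (by norm_num)).differentiableAt
        (by norm_num)).clm_apply (differentiableAt_const e)
    have hdg : DifferentiableAt ℝ (fun w => (fderiv ℝ g w) e) z :=
      (((hg.self_of_nhds).fderiv_right (m := 1) (by norm_num)).differentiableAt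
        (by norm_num)).clm_apply (differentiableAt_const e)
    rw [hev.fderiv_eq, fderiv_fun_sub hdf hdg]
    simp
  unfold laplacianC
  rw [key 1, key Complex.I]
  ring

theorem stmt_18 (u : ℂ → ℝ) (hu : ContDiff ℝ 2 u) (c : ℝ) (hc : 0 < c) :
    ¬ (∀ z : ℂ, c * Real.exp (u z) ≤ laplacianC u z) := by
  intro h
  -- Main claim: for every R > 0, u 0 ≤ log (8 / (c * R^2)).
  have key : ∀ R : ℝ, 0 < R → u 0 ≤ Real.log (8 / (c * R^2)) := by
    intro R hR
    obtain ⟨v, hvdef⟩ : ∃ v : ℂ → ℝ, v = vf R c := ⟨_, rfl⟩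
    obtain ⟨F, hFdef⟩ : ∃ F : ℂ → ℝ, F = fun z => u z - v z := ⟨_, rfl⟩
    have hwopen : IsOpen {w : ℂ | 0 < wf R w} := isOpen_lt continuous_const (wf_cont R)
    -- bound for u on the closed ball
    obtain ⟨zM, _, hzM⟩ := (isCompact_closedBall (0:ℂ) R).exists_isMaxOn
      ⟨0, Metric.mem_closedBall_self hR.le⟩ hu.continuous.continuousOn
    obtain ⟨M, hMdef⟩ : ∃ M : ℝ, M = u zM := ⟨_, rfl⟩
    have hM : ∀ z : ℂ, ‖z‖ ≤ R → u z ≤ M := by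
      intro z hz
      rw [hMdef]
      exact hzM (by simpa [Metric.mem_closedBall, Complex.dist_eq] using hz)
    obtain ⟨A, hAdef⟩ : ∃ A : ℝ, A = Real.log (8*R^2/c) := ⟨_, rfl⟩
    obtain ⟨ε, hεdef⟩ : ∃ ε : ℝ, ε = Real.exp ((F 0 - M + A)/2) := ⟨_, rfl⟩
    have hε : 0 < ε := hεdef ▸ Real.exp_pos _
    -- boundary estimate
    have hbd : ∀ z : ℂ, ‖z‖ < R → wf R z ≤ ε → F z ≤ F 0 := by
      intro z hz hwz
      have hwpos : 0 < wf R z := wf_pos hz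
      have hlog : Real.log (wf R z) ≤ Real.log ε := Real.log_le_log hwpos hwz
      have hlogε : Real.log ε = (F 0 - M + A)/2 := by rw [hεdef]; exact Real.log_exp _
      have hvz : A - 2 * Real.log (wf R z) ≥ M - F 0 := by
        rw [hlogε] at hlog; linarith
      have huz : u z ≤ M := hM z hz.le
      have hvz2 : v z = A - 2 * Real.log (wf R z) := by rw [hvdef, hAdef]; rfl
      simp only [hFdef] at hvz ⊢
      rw [hvz2]
      linarith
    obtain ⟨r, hrdef⟩ : ∃ r : ℝ, r = Real.sqrt (max (R^2 - ε) 0) := ⟨_, rfl⟩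
    have hr0 : 0 ≤ r := hrdef ▸ Real.sqrt_nonneg _
    have hrR : r < R := by
      have h1 : max (R^2 - ε) 0 < R^2 := by
        rcases max_cases (R^2 - ε) 0 with ⟨he, _⟩ | ⟨he, _⟩ <;> rw [he] <;> nlinarith
      rw [hrdef]
      calc Real.sqrt (max (R^2 - ε) 0) < Real.sqrt (R^2) :=
          Real.sqrt_lt_sqrt (le_max_right _ _) h1
        _ = R := Real.sqrt_sq hR.le
    -- points in the annulus r ≤ |z| < R are controlled
    have hann : ∀ z : ℂ, r ≤ ‖z‖ → ‖z‖ < R → F z ≤ F 0 := by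
      intro z h1 h2
      apply hbd z h2
      have : r^2 ≤ ‖z‖ ^ 2 := by nlinarith [norm_nonneg z]
      rw [hrdef, Real.sq_sqrt (le_max_right _ _)] at this
      have h3 : R^2 - ε ≤ ‖z‖ ^2 := le_trans (le_max_left _ _) this
      have h4 : ‖z‖ ^ 2 = z.re^2 + z.im^2 := by
        rw [Complex.sq_norm, Complex.normSq_apply]; ring
      unfold wf
      nlinarith
    -- maximum on the closed ball of radius r
    have hsub : ∀ z : ℂ, ‖z‖ ≤ r → 0 < wf R z :=
      fun z hz => wf_pos (lt_of_le_of_lt hz hrR)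
    have hFcont : ContinuousOn F (Metric.closedBall (0:ℂ) r) := by
      rw [hFdef, hvdef]
      intro z hz
      have hz' : ‖z‖ ≤ r := by
        simpa [Metric.mem_closedBall, Complex.dist_eq] using hz
      exact ((hu.continuous.continuousAt).sub
        ((vf_contDiffAt (hsub z hz')).continuousAt)).continuousWithinAt
    obtain ⟨z0, hz0mem, hz0max⟩ := (isCompact_closedBall (0:ℂ) r).exists_isMaxOn
      ⟨0, Metric.mem_closedBall_self hr0⟩ hFcont
    have hz0r : ‖z0‖ ≤ r := by
      simpa [Metric.mem_closedBall, Complex.dist_eq] using hz0mem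
    have hz0R : ‖z0‖ < R := lt_of_le_of_lt hz0r hrR
    have h0mem : (0:ℂ) ∈ Metric.closedBall (0:ℂ) r := Metric.mem_closedBall_self hr0
    have hF0 : F 0 ≤ F z0 := hz0max h0mem
    -- global max on the ball of radius R
    have hglobal : ∀ z : ℂ, ‖z‖ < R → F z ≤ F z0 := by
      intro z hz
      by_cases hcase : ‖z‖ ≤ r
      · exact hz0max (by simpa [Metric.mem_closedBall, Complex.dist_eq] using hcase)
      · exact le_trans (hann z (le_of_not_ge hcase) hz) hF0
    have hlocmax : IsLocalMax F z0 := by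
      have hball : Metric.ball (0:ℂ) R ∈ nhds z0 :=
        (Metric.isOpen_ball).mem_nhds (by simpa [Metric.mem_ball, Complex.dist_eq] using hz0R)
      filter_upwards [hball] with z hz
      exact hglobal z (by simpa [Metric.mem_ball, Complex.dist_eq] using hz)
    -- laplacian comparison at z0
    have hz0w : 0 < wf R z0 := wf_pos hz0R
    have hvev : ∀ᶠ w in nhds z0, ContDiffAt ℝ 2 v w := by
      filter_upwards [hwopen.mem_nhds hz0w] with w hw
      rw [hvdef]
      exact vf_contDiffAt hw
    have huev : ∀ᶠ w in nhds z0, ContDiffAt ℝ 2 u w :=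
      Eventually.of_forall fun w => hu.contDiffAt
    have hFev : ∀ᶠ w in nhds z0, ContDiffAt ℝ 2 F w := by
      filter_upwards [huev, hvev] with w h1 h2
      rw [hFdef]
      exact h1.sub h2
    have hlapF : laplacianC F z0 ≤ 0 := laplacian_nonpos hFev hlocmax
    have hlapsub : laplacianC F z0 = laplacianC u z0 - laplacianC v z0 := by
      have h2 := lap_sub huev hvev
      rw [← hFdef] at h2
      exact h2
    have hcomp : laplacianC u z0 ≤ laplacianC v z0 := by linarith
    have hlapv : laplacianC v z0 = c * Real.exp (v z0) := by
      rw [hvdef, vf_laplacian hz0w, vf_exp hR hc hz0w]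
    have huv : u z0 ≤ v z0 := by
      have h1 : c * Real.exp (u z0) ≤ c * Real.exp (v z0) := by
        calc c * Real.exp (u z0) ≤ laplacianC u z0 := h z0
          _ ≤ laplacianC v z0 := hcomp
          _ = c * Real.exp (v z0) := hlapv
      have h2 : Real.exp (u z0) ≤ Real.exp (v z0) := le_of_mul_le_mul_left h1 hc
      exact Real.exp_le_exp.1 h2
    have hFz0 : F z0 ≤ 0 := by simp only [hFdef]; linarith
    have hu0v0 : u 0 ≤ v 0 := by
      have := le_trans hF0 hFz0
      simp only [hFdef] at this
      linarith
    -- compute v 0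
    have hv0 : v 0 = Real.log (8 / (c * R^2)) := by
      have hw0 : wf R 0 = R^2 := by simp [wf]
      have e1 : v 0 = Real.log (8*R^2/c) - Real.log ((R^2)^2) := by
        rw [hvdef]
        simp only [vf, hw0, Real.log_pow]
        push_cast; ring
      rw [e1, ← Real.log_div (by positivity) (by positivity)]
      congr 1
      field_simp
    linarith [hu0v0, hv0.symm.le]
  -- choose R large enough for a contradiction
  set x : ℝ := 8 / (c * Real.exp (u 0)) with hxdef
  have hx : 0 < x := by positivity
  set R : ℝ := Real.sqrt x + 1 with hRdef
  have hR : 0 < R := by positivity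
  have hR2 : x < R^2 := by
    have h1 : Real.sqrt x ^ 2 = x := Real.sq_sqrt hx.le
    nlinarith [Real.sqrt_nonneg x]
  have hlt : 8 / (c * R^2) < Real.exp (u 0) := by
    rw [div_lt_iff₀ (by positivity)]
    rw [hxdef, div_lt_iff₀ (by positivity)] at hR2
    nlinarith [Real.exp_pos (u 0)]
  have hkey := key R hR
  have hlog' : Real.log (8 / (c * R^2)) < u 0 :=
    (Real.log_lt_iff_lt_exp (by positivity)).2 hlt
  linarith
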